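/- arXiv:2306.09740 — 2 statements merged into one kernel-verified Lean document; each statement's English description precedes it below -/
import Mathlib

section
/- For μ ∈ X and a Borel probability measure P on X, the metric spatial depth satisfies D(μ; P) = 0 if and only if P({μ}) = 0 and the product measure P⊗P assigns probability 1 to the set of pairs (x₁, x₂) such that d(x₁, μ) = d(x₁, x₂) + d(x₂, μ) or d(x₂, μ) = d(x₂, x₁) + d(x₁, μ), i.e., almost surely one of the two sampled points lies on a metric line between the other sampled point and μ with μ as an endpoint. -/
open MeasureTheory
open scoped Classical

/-- The kernel `h` of the metric spatial depth. -/
noncomputable def mh {X : Type*} [MetricSpace X] (x₁ x₂ x₃ : X) : ℝ :=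
  if x₃ = x₁ ∨ x₃ = x₂ then 0
  else (dist x₁ x₃ ^ 2 + dist x₂ x₃ ^ 2 - dist x₁ x₂ ^ 2) / (dist x₁ x₃ * dist x₂ x₃)

/-- The metric spatial depth of `μ` with respect to the measure `P`. -/
noncomputable def msDepth {X : Type*} [MetricSpace X] [MeasurableSpace X]
    (μ : X) (P : Measure X) : ℝ :=
  1 - (1 / 2) * ∫ x₁, ∫ x₂, mh x₁ x₂ μ ∂P ∂P

lemma abs_mh_le_two {X : Type*} [MetricSpace X] (x₁ x₂ x₃ : X) : |mh x₁ x₂ x₃| ≤ 2 := by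
  unfold mh
  split
  · simp
  · rename_i h
    push_neg at h
    have ha : 0 < dist x₁ x₃ := dist_pos.2 fun e => h.1 e.symm
    have hb : 0 < dist x₂ x₃ := dist_pos.2 fun e => h.2 e.symm
    have t1 : dist x₁ x₂ ≤ dist x₁ x₃ + dist x₃ x₂ := dist_triangle _ _ _
    have t2 : dist x₁ x₃ ≤ dist x₁ x₂ + dist x₂ x₃ := dist_triangle _ _ _
    have t3 : dist x₂ x₃ ≤ dist x₂ x₁ + dist x₁ x₃ := dist_triangle _ _ _
    rw [dist_comm x₃ x₂] at t1
    rw [dist_comm x₂ x₁] at t3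
    rw [abs_div, abs_of_pos (mul_pos ha hb), div_le_iff₀ (mul_pos ha hb), abs_le]
    constructor <;> nlinarith [dist_nonneg (x := x₁) (y := x₂)]

lemma mh_eq_two_iff {X : Type*} [MetricSpace X] (x₁ x₂ μ : X) :
    mh x₁ x₂ μ = 2 ↔ ¬(μ = x₁ ∨ μ = x₂) ∧
      (dist x₁ μ = dist x₁ x₂ + dist x₂ μ ∨ dist x₂ μ = dist x₂ x₁ + dist x₁ μ) := by
  unfold mh
  split
  · rename_i h; simp [h]
  · rename_i h
    push_neg at h
    have ha : 0 < dist x₁ μ := dist_pos.2 fun e => h.1 e.symm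
    have hb : 0 < dist x₂ μ := dist_pos.2 fun e => h.2 e.symm
    have hc : (0:ℝ) ≤ dist x₁ x₂ := dist_nonneg
    rw [div_eq_iff (mul_pos ha hb).ne']
    rw [dist_comm x₂ x₁]
    push_neg
    constructor
    · intro hE
      refine ⟨h, ?_⟩
      have hz : (dist x₁ μ - dist x₂ μ - dist x₁ x₂) *
          (dist x₁ μ - dist x₂ μ + dist x₁ x₂) = 0 := by nlinarith
      rcases mul_eq_zero.1 hz with hz | hz
      · left; linarith
      · right; linarith
    · rintro ⟨-, hE | hE⟩ <;> nlinarith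

lemma measurable_mh {X : Type*} [MetricSpace X] [MeasurableSpace X] [BorelSpace X]
    [SecondCountableTopology X] (μ : X) :
    Measurable (fun p : X × X => mh p.1 p.2 μ) := by
  unfold mh
  have hs : MeasurableSet {p : X × X | μ = p.1 ∨ μ = p.2} :=
    ((isClosed_eq continuous_const continuous_fst).union
      (isClosed_eq continuous_const continuous_snd)).measurableSet
  exact Measurable.ite hs measurable_const ((by fun_prop : Measurable (fun p : X × X =>
    dist p.1 μ ^ 2 + dist p.2 μ ^ 2 - dist p.1 p.2 ^ 2)).div (by fun_prop))

theorem msDepth_eq_zero_iff {X : Type*} [MetricSpace X] [CompleteSpace X]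
    [SecondCountableTopology X] [MeasurableSpace X] [BorelSpace X]
    (μ : X) (P : Measure X) [IsProbabilityMeasure P] :
    msDepth μ P = 0 ↔
      P {μ} = 0 ∧
      (P.prod P) {p : X × X |
        dist p.1 μ = dist p.1 p.2 + dist p.2 μ ∨
        dist p.2 μ = dist p.2 p.1 + dist p.1 μ} = 1 := by
  set f : X × X → ℝ := fun p => mh p.1 p.2 μ with hfdef
  set S : Set (X × X) := {p : X × X |
      dist p.1 μ = dist p.1 p.2 + dist p.2 μ ∨
      dist p.2 μ = dist p.2 p.1 + dist p.1 μ} with hSdef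
  have hSm : MeasurableSet S := by
    refine ((isClosed_eq ?_ ?_).union (isClosed_eq ?_ ?_)).measurableSet <;> fun_prop
  have hfm : Measurable f := measurable_mh μ
  have hbound : ∀ p : X × X, |f p| ≤ 2 := fun p => abs_mh_le_two p.1 p.2 μ
  have hint : Integrable f (P.prod P) := by
    refine (integrable_const (2:ℝ)).mono' hfm.aestronglyMeasurable ?_
    exact ae_of_all _ fun p => by simpa [Real.norm_eq_abs] using hbound p
  have hiter : ∫ x₁, ∫ x₂, mh x₁ x₂ μ ∂P ∂P = ∫ p, f p ∂(P.prod P) :=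
    integral_integral (f := fun x₁ x₂ => mh x₁ x₂ μ) hint
  have h1 : msDepth μ P = 0 ↔ ∫ p, f p ∂(P.prod P) = 2 := by
    rw [msDepth, hiter]
    constructor <;> intro h <;> linarith
  have h2 : (∫ p, f p ∂(P.prod P) = 2) ↔ ∀ᵐ p ∂(P.prod P), f p = 2 := by
    have hg : Integrable (fun p => 2 - f p) (P.prod P) := (integrable_const 2).sub hint
    have hnn : 0 ≤ fun p => 2 - f p := fun p => by
      have := (abs_le.1 (hbound p)).2; simp; linarith
    have hsub : ∫ p, (2 - f p) ∂(P.prod P) = 2 - ∫ p, f p ∂(P.prod P) := by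
      rw [integral_sub (integrable_const 2) hint, integral_const]; simp
    have hz := integral_eq_zero_iff_of_nonneg hnn hg
    constructor
    · intro h
      have h0 : ∫ p, (2 - f p) ∂(P.prod P) = 0 := by rw [hsub, h]; ring
      filter_upwards [hz.1 h0] with p hp
      have : 2 - f p = 0 := hp
      linarith
    · intro h
      have : f =ᵐ[P.prod P] fun _ => (2:ℝ) := h
      rw [integral_congr_ae this, integral_const]; simp
  have h3 : (∀ᵐ p ∂(P.prod P), f p = 2) ↔
      ∀ᵐ p ∂(P.prod P), ¬(μ = p.1 ∨ μ = p.2) ∧ p ∈ S := by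
    exact Filter.eventually_congr (ae_of_all _ fun p => mh_eq_two_iff p.1 p.2 μ)
  rw [h1, h2, h3]
  have hfst : (P.prod P) {p : X × X | μ = p.1} = P {μ} := by
    have he : {p : X × X | μ = p.1} = ({μ} : Set X) ×ˢ Set.univ := by
      ext p
      simp only [Set.mem_setOf_eq, Set.mem_prod, Set.mem_singleton_iff, Set.mem_univ, and_true]
      exact eq_comm
    rw [he, Measure.prod_prod]; simp
  have hsnd : (P.prod P) {p : X × X | μ = p.2} = P {μ} := by
    have he : {p : X × X | μ = p.2} = Set.univ ×ˢ ({μ} : Set X) := by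
      ext p
      simp only [Set.mem_setOf_eq, Set.mem_prod, Set.mem_singleton_iff, Set.mem_univ, true_and]
      exact eq_comm
    rw [he, Measure.prod_prod]; simp
  constructor
  · intro h
    have h1' : ∀ᵐ p ∂(P.prod P), ¬ (μ = p.1) := by
      filter_upwards [h] with p hp
      exact fun e => hp.1 (Or.inl e)
    have hS' : ∀ᵐ p ∂(P.prod P), p ∈ S := by
      filter_upwards [h] with p hp using hp.2
    rw [ae_iff] at h1' hS'
    simp only [not_not] at h1'
    refine ⟨by rw [← hfst]; exact h1', ?_⟩
    have : (P.prod P) Sᶜ = 0 := by exact hS'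
    rwa [prob_compl_eq_zero_iff hSm] at this
  · rintro ⟨hμ, hS⟩
    have e1 : ∀ᵐ p ∂(P.prod P), ¬ (μ = p.1) := by
      rw [ae_iff]; simp only [not_not]; rw [hfst]; exact hμ
    have e2 : ∀ᵐ p ∂(P.prod P), ¬ (μ = p.2) := by
      rw [ae_iff]; simp only [not_not]; rw [hsnd]; exact hμ
    have e3 : ∀ᵐ p ∂(P.prod P), p ∈ S := by
      rw [ae_iff]
      have : {p : X × X | ¬ p ∈ S} = Sᶜ := rfl
      rw [this, prob_compl_eq_zero_iff hSm]
      exact hS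
    filter_upwards [e1, e2, e3] with p hp1 hp2 hp3
    exact ⟨fun h => h.elim hp1 hp2, hp3⟩
end

section
/- Fix μ, z ∈ X and a Borel probability measure P on X. Then the influence function of the metric spatial depth at z, i.e., the limit as ε → 0⁺ of (D(μ; (1 − ε)·P + ε·δ_z) − D(μ; P))/ε, exists and equals 2 − 2·D(μ; P) − ∫ h(x, z, μ) dP(x). -/
open MeasureTheory
open scoped Classical

lemma mh_symm {X : Type*} [MetricSpace X] (x y w : X) : mh x y w = mh y x w := by
  simp only [mh, or_comm]
  split_ifs with h
  · rfl
  · rw [dist_comm x y]; ring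

lemma mh_abs_le {X : Type*} [MetricSpace X] (x y w : X) : |mh x y w| ≤ 2 := by
  unfold mh
  split_ifs with h
  · simp
  · push_neg at h
    have ha : 0 < dist x w := dist_pos.2 fun e => h.1 e.symm
    have hb : 0 < dist y w := dist_pos.2 fun e => h.2 e.symm
    rw [abs_div, abs_of_pos (mul_pos ha hb), div_le_iff₀ (mul_pos ha hb)]
    have h1 : dist x y ≤ dist x w + dist y w := dist_triangle_right x y w
    have h2 : dist x w ≤ dist x y + dist y w := dist_triangle x y w
    have h3 : dist y w ≤ dist x y + dist x w := by
      simpa [dist_comm y x] using dist_triangle y x w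
    have h0 : (0:ℝ) ≤ dist x y := dist_nonneg
    rw [abs_le]
    constructor <;> nlinarith

lemma mh_meas {X : Type*} [MetricSpace X] [SecondCountableTopology X] [MeasurableSpace X]
    [BorelSpace X] (μ : X) : Measurable (fun p : X × X => mh p.1 p.2 μ) := by
  unfold mh
  apply Measurable.ite
  · have : {p : X × X | μ = p.1 ∨ μ = p.2} =
        (Prod.fst ⁻¹' {μ}) ∪ (Prod.snd ⁻¹' {μ}) := by
      ext p; simp [eq_comm]
    rw [this]
    exact ((measurable_fst (measurableSet_singleton μ)).union
      (measurable_snd (measurableSet_singleton μ)))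
  · exact measurable_const
  · apply Measurable.div
    · apply Measurable.sub
      · exact ((measurable_fst.dist measurable_const).pow_const 2).add
          ((measurable_snd.dist measurable_const).pow_const 2)
      · exact (measurable_fst.dist measurable_snd).pow_const 2
    · exact (measurable_fst.dist measurable_const).mul (measurable_snd.dist measurable_const)

lemma integ_of_bound {X : Type*} [MeasurableSpace X] (ν : Measure X) [IsFiniteMeasure ν]
    {f : X → ℝ} (hf : Measurable f) (hb : ∀ x, |f x| ≤ 2) : Integrable f ν :=
  (integrable_const (2:ℝ)).mono' hf.aestronglyMeasurable
    (ae_of_all _ (by simpa [Real.norm_eq_abs] using hb))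

theorem msDepth_influence_function {X : Type*} [MetricSpace X] [CompleteSpace X]
    [SecondCountableTopology X] [MeasurableSpace X] [BorelSpace X]
    (μ z : X) (P : Measure X) [IsProbabilityMeasure P] :
    Filter.Tendsto
      (fun ε : ℝ =>
        (msDepth μ (ENNReal.ofReal (1 - ε) • P + ENNReal.ofReal ε • Measure.dirac z)
          - msDepth μ P) / ε)
      (nhdsWithin 0 (Set.Ioi 0))
      (nhds (2 - 2 * msDepth μ P - ∫ x, mh x z μ ∂P)) := by
  have hmeas := mh_meas (X := X) μ
  have hm1 : ∀ x₁ : X, Measurable fun x₂ => mh x₁ x₂ μ := fun x₁ =>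
    hmeas.comp (measurable_prodMk_left)
  have hm2 : Measurable fun x₁ => mh x₁ z μ :=
    hmeas.comp (measurable_id.prodMk measurable_const)
  set K : X → ℝ := fun x₁ => ∫ x₂, mh x₁ x₂ μ ∂P with hK
  have hKsm : StronglyMeasurable K := hmeas.stronglyMeasurable.integral_prod_right'
  have hKb : ∀ x, |K x| ≤ 2 := by
    intro x
    rw [← Real.norm_eq_abs]
    calc ‖K x‖ ≤ 2 * (P Set.univ).toReal := norm_integral_le_of_norm_le_const
          (ae_of_all _ fun y => by simpa [Real.norm_eq_abs] using mh_abs_le x y μ)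
      _ = 2 := by simp
  have hIK : (∫ x₁, ∫ x₂, mh x₁ x₂ μ ∂P ∂P) = ∫ x₁, K x₁ ∂P := rfl
  set I : ℝ := ∫ x₁, K x₁ ∂P with hI
  set J : ℝ := ∫ x, mh x z μ ∂P with hJ
  set c : ℝ := mh z z μ with hc
  have iK : Integrable K P := integ_of_bound P hKsm.measurable hKb
  have imz : Integrable (fun x => mh x z μ) P := integ_of_bound P hm2 fun x => mh_abs_le x z μ
  have hKz : K z = J := by
    rw [hK, hJ]
    exact integral_congr_ae (ae_of_all _ fun x => mh_symm z x μ)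
  have key : ∀ ε : ℝ, ε ∈ Set.Ioo (0:ℝ) 1 →
      (msDepth μ (ENNReal.ofReal (1 - ε) • P + ENNReal.ofReal ε • Measure.dirac z)
        - msDepth μ P) / ε
        = -(1/2) * ((ε - 2) * I + 2 * (1 - ε) * J + ε * c) := by
    intro ε hε
    obtain ⟨hε0, hε1⟩ := hε
    have h1ε : (0:ℝ) ≤ 1 - ε := by linarith
    set Q := ENNReal.ofReal (1 - ε) • P + ENNReal.ofReal ε • Measure.dirac z with hQ
    have inner : ∀ x₁, ∫ x₂, mh x₁ x₂ μ ∂Q = (1-ε) * K x₁ + ε * mh x₁ z μ := by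
      intro x₁
      have i1 : Integrable (fun x₂ => mh x₁ x₂ μ) P :=
        integ_of_bound P (hm1 x₁) fun y => mh_abs_le x₁ y μ
      have i2 : Integrable (fun x₂ => mh x₁ x₂ μ) (Measure.dirac z) :=
        integ_of_bound _ (hm1 x₁) fun y => mh_abs_le x₁ y μ
      rw [hQ, integral_add_measure (i1.smul_measure ENNReal.ofReal_ne_top)
        (i2.smul_measure ENNReal.ofReal_ne_top), integral_smul_measure, integral_smul_measure,
        integral_dirac, ENNReal.toReal_ofReal h1ε, ENNReal.toReal_ofReal hε0.le]
      simp [smul_eq_mul, hK]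
    set G : X → ℝ := fun x => (1-ε) * K x + ε * mh x z μ with hG
    have hGm : Measurable G := (hKsm.measurable.const_mul _).add (hm2.const_mul _)
    have hGb : ∀ x, |G x| ≤ 2 := by
      intro x
      calc |G x| ≤ |(1-ε) * K x| + |ε * mh x z μ| := abs_add_le _ _
        _ = (1-ε) * |K x| + ε * |mh x z μ| := by
            rw [abs_mul, abs_mul, abs_of_nonneg h1ε, abs_of_nonneg hε0.le]
        _ ≤ (1-ε) * 2 + ε * 2 := add_le_add
            (mul_le_mul_of_nonneg_left (hKb x) h1ε)
            (mul_le_mul_of_nonneg_left (mh_abs_le x z μ) hε0.le)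
        _ = 2 := by ring
    have iGP : Integrable G P := integ_of_bound P hGm hGb
    have iGd : Integrable G (Measure.dirac z) := integ_of_bound _ hGm hGb
    have hGint : ∫ x, G x ∂P = (1-ε) * I + ε * J := by
      rw [hG, integral_add (iK.const_mul _) (imz.const_mul _),
        integral_const_mul, integral_const_mul, hI, hJ]
    have houter : ∫ x₁, ∫ x₂, mh x₁ x₂ μ ∂Q ∂Q
        = (1-ε) * ((1-ε) * I + ε * J) + ε * ((1-ε) * J + ε * c) := by
      calc ∫ x₁, ∫ x₂, mh x₁ x₂ μ ∂Q ∂Q = ∫ x₁, G x₁ ∂Q := by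
            exact integral_congr_ae (ae_of_all _ inner)
        _ = (1-ε) * ((1-ε) * I + ε * J) + ε * ((1-ε) * J + ε * c) := by
            rw [hQ, integral_add_measure (iGP.smul_measure ENNReal.ofReal_ne_top)
              (iGd.smul_measure ENNReal.ofReal_ne_top), integral_smul_measure,
              integral_smul_measure, integral_dirac, ENNReal.toReal_ofReal h1ε,
              ENNReal.toReal_ofReal hε0.le, smul_eq_mul, smul_eq_mul, hGint]
            rw [hG]
            simp only [hKz, hc]
    simp only [msDepth]
    rw [houter, hIK, ← hI]
    field_simp
    ring
  have hmP : msDepth μ P = 1 - 1/2 * I := by rw [msDepth]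
  have hval : 2 - 2 * msDepth μ P - J = I - J := by rw [hmP]; ring
  rw [hval]
  have hcont : Continuous fun ε : ℝ => -(1/2) * ((ε - 2) * I + 2 * (1 - ε) * J + ε * c) := by
    continuity
  have hlim : Filter.Tendsto (fun ε : ℝ => -(1/2) * ((ε - 2) * I + 2 * (1 - ε) * J + ε * c))
      (nhdsWithin 0 (Set.Ioi 0)) (nhds (I - J)) := by
    have h0 : -(1/2) * (((0:ℝ) - 2) * I + 2 * (1 - 0) * J + 0 * c) = I - J := by ring
    exact h0 ▸ (hcont.tendsto 0).mono_left nhdsWithin_le_nhds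
  refine hlim.congr' ?_
  filter_upwards [Ioo_mem_nhdsGT_of_mem (by norm_num : (0:ℝ) ∈ Set.Ico 0 1)] with ε hε
  exact (key ε hε).symm
end
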